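/- arXiv:1512.04046 — 2 statements merged into one kernel-verified Lean document; each statement's English description precedes it below -/
import Mathlib

section
/- Let R be an algebraic curvature tensor on V with vanishing Ricci tensor (ric_R = 0), and fix x₂,x₄,x₅,x₆ ∈ V. Then Σᵢ Young(2,2)[(z₁,z₂,z₃,z₄) ↦ ⟪z₁,z₃⟫·R(x₅,z₂,x₆,z₄)](eᵢ,x₂,eᵢ,x₄) = (2n − 4)·( R(x₅,x₂,x₆,x₄) + R(x₅,x₄,x₆,x₂) ). -/
/-
For a bilinear form `B`, the row symmetrizations see `⟪z₁, z₃⟫ * B z₂ z₄` only through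
`S(u, v) = B u v + B v u`, so the Young symmetrizer expands into four products `⟪·,·⟫ * S(·,·)`.
Tracing the first and third slots, `⟪eᵢ, eᵢ⟫` contributes `n S`, each of the two mixed terms
contracts to `-S`, and the last term carries the trace of `S`, which for
`B(u, v) = R(x₅, u, x₆, v)` is `-2 ric_R(x₅, x₆) = 0`.
-/

open scoped RealInnerProductSpace

namespace CurvJet

variable {V : Type*} [NormedAddCommGroup V] [InnerProductSpace ℝ V] {n : ℕ}

/-- Quadrilinear forms on `V`, the ambient space of algebraic curvature tensors. -/
abbrev Curv (V : Type*) [NormedAddCommGroup V] [InnerProductSpace ℝ V] : Type _ :=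
  V →ₗ[ℝ] V →ₗ[ℝ] V →ₗ[ℝ] V →ₗ[ℝ] ℝ

/-- The underlying 4-argument function of a quadrilinear form. -/
def toFun4 (R : Curv V) : V → V → V → V → ℝ := fun z₁ z₂ z₃ z₄ => R z₁ z₂ z₃ z₄

/-- `R` is an algebraic curvature tensor: antisymmetry in the first pair, pair symmetry,
and the first Bianchi identity. -/
def IsCurv (R : Curv V) : Prop :=
  (∀ x y z w, R x y z w = - R y x z w) ∧
  (∀ x y z w, R x y z w = R z w x y) ∧
  (∀ x y z w, R x y z w + R y z x w + R z x y w = 0)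

/-- The Ricci tensor `ric_R(x,y) = -∑ᵢ R(x,eᵢ,y,eᵢ)`. -/
noncomputable def ric (e : OrthonormalBasis (Fin n) ℝ V) (R : Curv V) (x y : V) : ℝ :=
  - ∑ i, R x (e i) y (e i)

/-- The curvature endomorphism `R_{x,y}`, characterized by `⟪R_{x,y}z, w⟫ = R(x,y,z,w)`. -/
noncomputable def curvEnd (e : OrthonormalBasis (Fin n) ℝ V) (R : Curv V) (x y z : V) : V :=
  ∑ i, R x y z (e i) • e i

/-- Action of an endomorphism `B` on a covariant 4-tensor by algebraic derivation. -/
def act4 (B : V → V) (A : V → V → V → V → ℝ) (x₁ x₂ x₃ x₄ : V) : ℝ :=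
  -(A (B x₁) x₂ x₃ x₄ + A x₁ (B x₂) x₃ x₄ + A x₁ x₂ (B x₃) x₄ + A x₁ x₂ x₃ (B x₄))

/-- Action of an endomorphism `B` on a covariant 2-tensor by algebraic derivation. -/
def act2 (B : V → V) (A : V → V → ℝ) (x y : V) : ℝ :=
  -(A (B x) y + A x (B y))

/-- `R*A` for a covariant 4-tensor `A`. -/
noncomputable def star4 (e : OrthonormalBasis (Fin n) ℝ V) (R : Curv V)
    (A : V → V → V → V → ℝ) (x₁ x₂ x₃ x₄ : V) : ℝ :=
  -((∑ j, act4 (curvEnd e R x₁ (e j)) A (e j) x₂ x₃ x₄)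
    + (∑ j, act4 (curvEnd e R x₂ (e j)) A x₁ (e j) x₃ x₄)
    + (∑ j, act4 (curvEnd e R x₃ (e j)) A x₁ x₂ (e j) x₄)
    + (∑ j, act4 (curvEnd e R x₄ (e j)) A x₁ x₂ x₃ (e j)))

/-- `R*A` for a covariant 2-tensor `A`. -/
noncomputable def star2 (e : OrthonormalBasis (Fin n) ℝ V) (R : Curv V)
    (A : V → V → ℝ) (x y : V) : ℝ :=
  -((∑ j, act2 (curvEnd e R x (e j)) A (e j) y)
    + (∑ j, act2 (curvEnd e R y (e j)) A x (e j)))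

/-- The algebraic curvature tensor `R*R`. -/
noncomputable def RstarR (e : OrthonormalBasis (Fin n) ℝ V) (R : Curv V) :
    V → V → V → V → ℝ :=
  star4 e R (toFun4 R)

/-- Row symmetrization of the Young tableau with rows `{1,3}`, `{2,4}` on a 4-tensor. -/
def rowSym22 (T : V → V → V → V → ℝ) (x₁ x₂ x₃ x₄ : V) : ℝ :=
  T x₁ x₂ x₃ x₄ + T x₃ x₂ x₁ x₄ + T x₁ x₄ x₃ x₂ + T x₃ x₄ x₁ x₂

/-- The Young symmetrizer of the tableau with rows `{1,3}`, `{2,4}` and columns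
`{1,2}`, `{3,4}`, acting on 4-tensors. -/
def young22 (T : V → V → V → V → ℝ) (x₁ x₂ x₃ x₄ : V) : ℝ :=
  rowSym22 T x₁ x₂ x₃ x₄ - rowSym22 T x₂ x₁ x₃ x₄
    - rowSym22 T x₁ x₂ x₄ x₃ + rowSym22 T x₂ x₁ x₄ x₃

/-- Row symmetrization of the Young tableau with rows `{1,3,5,6}`, `{2,4}` on a 6-tensor. -/
noncomputable def rowSym42 (T : V → V → V → V → V → V → ℝ) (x₁ x₂ x₃ x₄ x₅ x₆ : V) : ℝ :=
  ∑ σ : Equiv.Perm (Fin 4),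
    (T (![x₁, x₃, x₅, x₆] (σ 0)) x₂ (![x₁, x₃, x₅, x₆] (σ 1)) x₄
        (![x₁, x₃, x₅, x₆] (σ 2)) (![x₁, x₃, x₅, x₆] (σ 3))
     + T (![x₁, x₃, x₅, x₆] (σ 0)) x₄ (![x₁, x₃, x₅, x₆] (σ 1)) x₂
        (![x₁, x₃, x₅, x₆] (σ 2)) (![x₁, x₃, x₅, x₆] (σ 3)))

/-- The Young symmetrizer of the tableau on six slots with rows `{1,3,5,6}`, `{2,4}` and
columns `{1,2}`, `{3,4}`. -/
noncomputable def young42 (T : V → V → V → V → V → V → ℝ) (x₁ x₂ x₃ x₄ x₅ x₆ : V) : ℝ :=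
  rowSym42 T x₁ x₂ x₃ x₄ x₅ x₆ - rowSym42 T x₂ x₁ x₃ x₄ x₅ x₆
    - rowSym42 T x₁ x₂ x₄ x₃ x₅ x₆ + rowSym42 T x₂ x₁ x₄ x₃ x₅ x₆

/-- Row symmetrization of the Young tableau with rows `{1,3,5}`, `{2,4}` on a 5-tensor
(the fifth function argument is the slot lying in the first row). -/
noncomputable def rowSym5 (T : V → V → V → V → V → ℝ) (z₁ z₂ z₃ z₄ z₅ : V) : ℝ :=
  ∑ σ : Equiv.Perm (Fin 3),
    (T (![z₁, z₃, z₅] (σ 0)) z₂ (![z₁, z₃, z₅] (σ 1)) z₄ (![z₁, z₃, z₅] (σ 2))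
     + T (![z₁, z₃, z₅] (σ 0)) z₄ (![z₁, z₃, z₅] (σ 1)) z₂ (![z₁, z₃, z₅] (σ 2)))

/-- The Young symmetrizer of the tableau on five slots with rows `{1,3,5}`, `{2,4}` and
columns `{1,2}`, `{3,4}` (the fifth function argument is the slot in the first row). -/
noncomputable def young5 (T : V → V → V → V → V → ℝ) (z₁ z₂ z₃ z₄ z₅ : V) : ℝ :=
  rowSym5 T z₁ z₂ z₃ z₄ z₅ - rowSym5 T z₂ z₁ z₃ z₄ z₅
    - rowSym5 T z₁ z₂ z₄ z₃ z₅ + rowSym5 T z₂ z₁ z₄ z₃ z₅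

/-- First-order jet conditions: each `∇ₓR` is a curvature tensor and the second Bianchi
identity holds. -/
def IsJet1 (D1 : V →ₗ[ℝ] Curv V) : Prop :=
  (∀ x, IsCurv (D1 x)) ∧
  (∀ x y z u v, D1 x y z u v + D1 y z x u v + D1 z x y u v = 0)

/-- Second-order jet conditions: each `∇²_{x,y}R` is a curvature tensor, the second Bianchi
identity holds, and the Ricci identity `∇²_{x,y}R − ∇²_{y,x}R = R_{x,y}·R` holds. -/
def IsJet2 (e : OrthonormalBasis (Fin n) ℝ V) (R : Curv V)
    (D2 : V →ₗ[ℝ] V →ₗ[ℝ] Curv V) : Prop :=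
  (∀ x y, IsCurv (D2 x y)) ∧
  (∀ x y z w u v, D2 x y z w u v + D2 x z w y u v + D2 x w y z u v = 0) ∧
  (∀ x y z₁ z₂ z₃ z₄, D2 x y z₁ z₂ z₃ z₄ - D2 y x z₁ z₂ z₃ z₄ =
    act4 (curvEnd e R x y) (toFun4 R) z₁ z₂ z₃ z₄)

/-- Algebraic two-jet `(R, ∇R, ∇²R)`. -/
def IsTwoJet (e : OrthonormalBasis (Fin n) ℝ V) (R : Curv V)
    (D1 : V →ₗ[ℝ] Curv V) (D2 : V →ₗ[ℝ] V →ₗ[ℝ] Curv V) : Prop :=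
  IsCurv R ∧ IsJet1 D1 ∧ IsJet2 e R D2

/-- `∇ₓric(y,z) = -∑ᵢ ∇ₓR(y,eᵢ,z,eᵢ)`. -/
noncomputable def nablaRic (e : OrthonormalBasis (Fin n) ℝ V)
    (D1 : V →ₗ[ℝ] Curv V) (x y z : V) : ℝ :=
  - ∑ i, D1 x y (e i) z (e i)

/-- `∇²_{x,y}ric(z,w) = -∑ᵢ ∇²_{x,y}R(z,eᵢ,w,eᵢ)`. -/
noncomputable def nabla2Ric (e : OrthonormalBasis (Fin n) ℝ V)
    (D2 : V →ₗ[ℝ] V →ₗ[ℝ] Curv V) (x y z w : V) : ℝ :=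
  - ∑ i, D2 x y z (e i) w (e i)

/-- The rough Laplacian `∇*∇R(z₁,z₂,z₃,z₄) = -∑ᵢ ∇²_{eᵢ,eᵢ}R(z₁,z₂,z₃,z₄)`. -/
noncomputable def roughLap (e : OrthonormalBasis (Fin n) ℝ V)
    (D2 : V →ₗ[ℝ] V →ₗ[ℝ] Curv V) (z₁ z₂ z₃ z₄ : V) : ℝ :=
  - ∑ i, D2 (e i) (e i) z₁ z₂ z₃ z₄

/-- `∇ₓδ_yR(z,w) = -∑ᵢ ∇²_{x,eᵢ}R(eᵢ,y,z,w)`. -/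
noncomputable def nablaDelta (e : OrthonormalBasis (Fin n) ℝ V)
    (D2 : V →ₗ[ℝ] V →ₗ[ℝ] Curv V) (x y z w : V) : ℝ :=
  - ∑ i, D2 x (e i) (e i) y z w

/-- The two-jet is Einstein: `ric = c⟪·,·⟫`, `∇ric = 0` and `∇²ric = 0`. -/
def IsEinsteinJet (e : OrthonormalBasis (Fin n) ℝ V) (R : Curv V)
    (D1 : V →ₗ[ℝ] Curv V) (D2 : V →ₗ[ℝ] V →ₗ[ℝ] Curv V) : Prop :=
  (∃ c : ℝ, ∀ x y, ric e R x y = c * ⟪x, y⟫) ∧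
  (∀ x y z, nablaRic e D1 x y z = 0) ∧
  (∀ x y z w, nabla2Ric e D2 x y z w = 0)

theorem sum_inner_mul_apply (e : OrthonormalBasis (Fin n) ℝ V) (f : V →ₗ[ℝ] ℝ) (x : V) :
    ∑ i, ⟪x, e i⟫ * f (e i) = f x := by
  conv_rhs => rw [← e.sum_repr' x]
  simp only [map_sum, map_smul, smul_eq_mul, real_inner_comm x]

theorem sum_inner_self (e : OrthonormalBasis (Fin n) ℝ V) : ∑ i, ⟪e i, e i⟫ = (n : ℝ) := by
  simp [e.orthonormal.1]

theorem rowSym22_inner_mul (B : V → V → ℝ) (a b c d : V) :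
    rowSym22 (fun z₁ z₂ z₃ z₄ => ⟪z₁, z₃⟫ * B z₂ z₄) a b c d = 2 * ⟪a, c⟫ * (B b d + B d b) := by
  simp only [rowSym22, real_inner_comm a c]
  ring

theorem young22_inner_mul (B : V → V → ℝ) (a b c d : V) :
    young22 (fun z₁ z₂ z₃ z₄ => ⟪z₁, z₃⟫ * B z₂ z₄) a b c d =
      2 * (⟪a, c⟫ * (B b d + B d b) - ⟪b, c⟫ * (B a d + B d a)
        - ⟪d, a⟫ * (B c b + B b c) + ⟪b, d⟫ * (B a c + B c a)) := by
  simp only [young22, rowSym22_inner_mul, real_inner_comm a d]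
  ring

theorem sum_young22_inner_mul (e : OrthonormalBasis (Fin n) ℝ V) (B : V →ₗ[ℝ] V →ₗ[ℝ] ℝ)
    (x y : V) :
    ∑ i, young22 (fun z₁ z₂ z₃ z₄ => ⟪z₁, z₃⟫ * B z₂ z₄) (e i) x (e i) y =
      (2 * (n : ℝ) - 4) * (B x y + B y x) + 4 * ⟪x, y⟫ * ∑ i, B (e i) (e i) := by
  have contract (u v : V) : ∑ i, ⟪u, e i⟫ * (B (e i) v + B v (e i)) = B u v + B v u := by
    simpa only [LinearMap.add_apply, LinearMap.flip_apply] using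
      sum_inner_mul_apply e (B.flip v + B v) u
  simp only [young22_inner_mul, ← Finset.mul_sum, Finset.sum_sub_distrib, Finset.sum_add_distrib,
    ← Finset.sum_mul, sum_inner_self, contract]
  ring

theorem young22_trace_metric_pair_general
    {V : Type*} [NormedAddCommGroup V] [InnerProductSpace ℝ V] {n : ℕ}
    (e : OrthonormalBasis (Fin n) ℝ V)
    (R : Curv V) (hric : ∀ x y, ric e R x y = 0)
    (x₂ x₄ x₅ x₆ : V) :
    ∑ i, young22 (fun z₁ z₂ z₃ z₄ => ⟪z₁, z₃⟫ * R x₅ z₂ x₆ z₄) (e i) x₂ (e i) x₄ =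
      (2 * (n : ℝ) - 4) * (R x₅ x₂ x₆ x₄ + R x₅ x₄ x₆ x₂) := by
  have hscal : ∑ i, R x₅ (e i) x₆ (e i) = 0 := neg_eq_zero.mp (hric x₅ x₆)
  simpa [hscal] using sum_young22_inner_mul e ((R x₅).flip x₆) x₂ x₄

/-- Trace of the Young(2,2)-symmetrization of
`(z₁,z₂,z₃,z₄) ↦ ⟪z₁,z₃⟫·R(x₅,z₂,x₆,z₄)` for Ricci-flat `R`. -/
theorem young22_trace_metric_pair
    {V : Type*} [NormedAddCommGroup V] [InnerProductSpace ℝ V] {n : ℕ}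
    (e : OrthonormalBasis (Fin n) ℝ V)
    (R : Curv V) (hR : IsCurv R) (hric : ∀ x y, ric e R x y = 0)
    (x₂ x₄ x₅ x₆ : V) :
    ∑ i, young22 (fun z₁ z₂ z₃ z₄ => ⟪z₁, z₃⟫ * R x₅ z₂ x₆ z₄) (e i) x₂ (e i) x₄ =
      (2 * (n : ℝ) - 4) * (R x₅ x₂ x₆ x₄ + R x₅ x₄ x₆ x₂) :=
  young22_trace_metric_pair_general e R hric x₂ x₄ x₅ x₆

end CurvJet
end

section
/- Let R be an algebraic curvature tensor on V with vanishing Ricci tensor (ric_R = 0), and let Ŝ := Young(4,2)[(x₁,…,x₆) ↦ ⟪x₅,x₆⟫·R(x₁,x₂,x₃,x₄)]. Then for all x₁,…,x₆ ∈ V: (i) −Σᵢ Ŝ(eᵢ,x₂,eᵢ,x₄,x₅,x₆) = −4(n+4)·( R(x₅,x₂,x₆,x₄) + R(x₅,x₄,x₆,x₂) ), and (ii) −Σᵢ Ŝ(x₁,x₂,x₃,x₄,eᵢ,eᵢ) = −24(n+4)·R(x₁,x₂,x₃,x₄). -/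
/-!
Write `Q(u,x,v,y) = R(u,x,v,y) + R(u,y,v,x)` (this is `sym24 R`). Summing `⟪z₅,z₆⟫ R(z₁,z₂,z₃,z₄)`
over the row permutations of `{1,3,5,6}` and `{2,4}` pairs, with weight 4, each two-element subset
of the first row through the metric and feeds the other two first-row slots, together with `x₂, x₄`,
to `Q`; this uses only the symmetry of `⟪·,·⟫` and the pair symmetry of `R`. Contracting two slots
of this expression either meets a metric factor, which returns `n` or reproduces `Q`, or contracts
`R` itself, which vanishes as `R` is Ricci-flat.

Contracting slots 5 and 6 commutes with the column antisymmetrization and leaves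
`4(n+4) Q(x₁,x₂,x₃,x₄)`, whose antisymmetrization in `{1,2}` and `{3,4}` is `6 R` by the Bianchi
identity. Contracting slots 1 and 3 gives `4(n+4) Q(x₅,x₂,x₆,x₄)` from the identity column
permutation; the other three bring in the traces over slots `{2,3}`, `{1,4}` and `{2,4}`, of which
the last vanishes and the other two cancel by the symmetries of `R`.
-/

open scoped RealInnerProductSpace

namespace CurvJet

variable {V : Type*} [NormedAddCommGroup V] [InnerProductSpace ℝ V] {n : ℕ}

open Equiv.Perm in
theorem sum_perm_fin_four {M : Type*} [AddCommMonoid M] (f : Fin 4 → Fin 4 → Fin 4 → Fin 4 → M) :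
    ∑ σ : Equiv.Perm (Fin 4), f (σ 0) (σ 1) (σ 2) (σ 3) =
      f 0 1 2 3 + f 0 1 3 2 + f 0 2 1 3 + f 0 2 3 1 + f 0 3 1 2 + f 0 3 2 1 +
      f 1 0 2 3 + f 1 0 3 2 + f 1 2 0 3 + f 1 2 3 0 + f 1 3 0 2 + f 1 3 2 0 +
      f 2 0 1 3 + f 2 0 3 1 + f 2 1 0 3 + f 2 1 3 0 + f 2 3 0 1 + f 2 3 1 0 +
      f 3 0 1 2 + f 3 0 2 1 + f 3 1 0 2 + f 3 1 2 0 + f 3 2 0 1 + f 3 2 1 0 := by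
  have sum_perm_succ (k : ℕ) (g : Equiv.Perm (Fin (k + 1)) → M) :
      ∑ σ, g σ = ∑ p, ∑ τ, g (decomposeFin.symm (p, τ)) := by
    rw [← decomposeFin.symm.sum_comp, Fintype.sum_prod_type]
  simp only [sum_perm_succ, Fin.sum_univ_succ, Finset.univ_unique, Finset.sum_singleton,
    ← Fin.succ_zero_eq_one, ← Fin.succ_one_eq_two, show (3 : Fin 4) = Fin.succ 2 from rfl,
    decomposeFin_symm_apply_zero, decomposeFin_symm_apply_succ]
  simp only [Equiv.swap_apply_def, Equiv.swap_self, Equiv.refl_apply, default_eq, coe_one, id_eq,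
    Fin.default_eq_zero, Fin.succ_zero_eq_one, Fin.succ_one_eq_two, Fin.reduceSucc, Fin.isValue,
    Fin.reduceEq, ↓reduceIte]
  abel

def sym24 (f : V → V → V → V → ℝ) (x₁ x₂ x₃ x₄ : V) : ℝ := f x₁ x₂ x₃ x₄ + f x₁ x₄ x₃ x₂

theorem rowSym42_inner_mul (f : V → V → V → V → ℝ) (hf : ∀ a b c d, f a b c d = f c d a b)
    (x₁ x₂ x₃ x₄ x₅ x₆ : V) :
    rowSym42 (fun z₁ z₂ z₃ z₄ z₅ z₆ => ⟪z₅, z₆⟫ * f z₁ z₂ z₃ z₄) x₁ x₂ x₃ x₄ x₅ x₆ =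
      4 * (⟪x₅, x₆⟫ * sym24 f x₁ x₂ x₃ x₄ + ⟪x₃, x₆⟫ * sym24 f x₁ x₂ x₅ x₄
        + ⟪x₃, x₅⟫ * sym24 f x₁ x₂ x₆ x₄ + ⟪x₁, x₆⟫ * sym24 f x₃ x₂ x₅ x₄
        + ⟪x₁, x₅⟫ * sym24 f x₃ x₂ x₆ x₄ + ⟪x₁, x₃⟫ * sym24 f x₅ x₂ x₆ x₄) := by
  let y : Fin 4 → V := ![x₁, x₃, x₅, x₆]
  refine (sum_perm_fin_four fun a b c d =>
    ⟪y c, y d⟫ * f (y a) x₂ (y b) x₄ + ⟪y c, y d⟫ * f (y a) x₄ (y b) x₂).trans ?_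
  simp only [y, sym24, Matrix.cons_val, hf _ x₄ _ x₂, real_inner_comm x₁ x₃, real_inner_comm x₁ x₅,
    real_inner_comm x₁ x₆, real_inner_comm x₃ x₅, real_inner_comm x₃ x₆, real_inner_comm x₅ x₆]
  ring

namespace IsCurv

variable {R : Curv V}

theorem antisymm_left (hR : IsCurv R) (x y z w : V) : R x y z w = -R y x z w := hR.1 x y z w

theorem pair_symm (hR : IsCurv R) (x y z w : V) : R x y z w = R z w x y := hR.2.1 x y z w

theorem bianchi (hR : IsCurv R) (x y z w : V) : R x y z w + R y z x w + R z x y w = 0 :=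
  hR.2.2 x y z w

theorem antisymm_right (hR : IsCurv R) (x y z w : V) : R x y z w = -R x y w z := by
  rw [hR.pair_symm, hR.antisymm_left, hR.pair_symm]

theorem apply_self_left (hR : IsCurv R) (x z w : V) : R x x z w = 0 := by
  linarith [hR.antisymm_left x x z w]

theorem apply_self_right (hR : IsCurv R) (x y z : V) : R x y z z = 0 := by
  linarith [hR.antisymm_right x y z z]

theorem sym24_alternate (hR : IsCurv R) (x₁ x₂ x₃ x₄ : V) :
    sym24 (toFun4 R) x₁ x₂ x₃ x₄ - sym24 (toFun4 R) x₂ x₁ x₃ x₄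
      - sym24 (toFun4 R) x₁ x₂ x₄ x₃ + sym24 (toFun4 R) x₂ x₁ x₄ x₃ = 6 * R x₁ x₂ x₃ x₄ := by
  simp only [sym24, toFun4]
  linear_combination hR.bianchi x₄ x₃ x₁ x₂ - hR.bianchi x₃ x₂ x₄ x₁
    - hR.antisymm_left x₁ x₂ x₃ x₄ - hR.antisymm_left x₁ x₃ x₄ x₂ + hR.antisymm_left x₃ x₂ x₄ x₁
    - 4 * hR.antisymm_right x₁ x₂ x₄ x₃ + 2 * hR.antisymm_right x₄ x₃ x₂ x₁
    - 3 * hR.pair_symm x₄ x₃ x₁ x₂ - hR.pair_symm x₄ x₃ x₂ x₁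

end IsCurv

section Trace

variable (e : OrthonormalBasis (Fin n) ℝ V) (R : Curv V)

theorem sum_inner_mul_apply₁ (y a b c : V) : ∑ i, ⟪e i, y⟫ * R (e i) a b c = R y a b c := by
  conv_rhs => rw [← e.sum_repr' y]
  simp [map_sum, LinearMap.sum_apply]

theorem sum_inner_mul_apply₂ (y a b c : V) : ∑ i, ⟪e i, y⟫ * R a (e i) b c = R a y b c := by
  conv_rhs => rw [← e.sum_repr' y]
  simp [map_sum, LinearMap.sum_apply]

theorem sum_inner_mul_apply₃ (y a b c : V) : ∑ i, ⟪e i, y⟫ * R a b (e i) c = R a b y c := by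
  conv_rhs => rw [← e.sum_repr' y]
  simp [map_sum, LinearMap.sum_apply]

theorem sum_inner_mul_apply₄ (y a b c : V) : ∑ i, ⟪e i, y⟫ * R a b c (e i) = R a b c y := by
  conv_rhs => rw [← e.sum_repr' y]
  simp [map_sum]

variable {e R}

theorem sum_apply₂₄_eq_zero (hric : ∀ x y, ric e R x y = 0) (a b : V) :
    ∑ i, R a (e i) b (e i) = 0 :=
  neg_eq_zero.mp (hric a b)

theorem IsCurv.sum_apply₁₃_eq_zero (hR : IsCurv R) (hric : ∀ x y, ric e R x y = 0) (a b : V) :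
    ∑ i, R (e i) a (e i) b = 0 := by
  simp_rw [hR.antisymm_left (e _) a, hR.antisymm_right a (e _) (e _) b, neg_neg]
  exact sum_apply₂₄_eq_zero hric a b

theorem IsCurv.sum_apply₁₄_eq_zero (hR : IsCurv R) (hric : ∀ x y, ric e R x y = 0) (a b : V) :
    ∑ i, R (e i) a b (e i) = 0 := by
  simp_rw [hR.antisymm_left (e _) a, Finset.sum_neg_distrib, sum_apply₂₄_eq_zero hric, neg_zero]

theorem IsCurv.sum_apply₂₃_eq_zero (hR : IsCurv R) (hric : ∀ x y, ric e R x y = 0) (a b : V) :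
    ∑ i, R a (e i) (e i) b = 0 := by
  simp_rw [hR.antisymm_right a (e _) (e _) b, Finset.sum_neg_distrib, sum_apply₂₄_eq_zero hric,
    neg_zero]

end Trace

def innerTensor (R : Curv V) : V → V → V → V → V → V → ℝ :=
  fun z₁ z₂ z₃ z₄ z₅ z₆ => ⟪z₅, z₆⟫ * R z₁ z₂ z₃ z₄

section InnerTensor

variable {e : OrthonormalBasis (Fin n) ℝ V} {R : Curv V} (hR : IsCurv R)
  (hric : ∀ x y, ric e R x y = 0)

include hR

theorem rowSym42_innerTensor (x₁ x₂ x₃ x₄ x₅ x₆ : V) :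
    rowSym42 (innerTensor R) x₁ x₂ x₃ x₄ x₅ x₆ =
      4 * (⟪x₅, x₆⟫ * sym24 (toFun4 R) x₁ x₂ x₃ x₄ + ⟪x₃, x₆⟫ * sym24 (toFun4 R) x₁ x₂ x₅ x₄
        + ⟪x₃, x₅⟫ * sym24 (toFun4 R) x₁ x₂ x₆ x₄ + ⟪x₁, x₆⟫ * sym24 (toFun4 R) x₃ x₂ x₅ x₄
        + ⟪x₁, x₅⟫ * sym24 (toFun4 R) x₃ x₂ x₆ x₄ + ⟪x₁, x₃⟫ * sym24 (toFun4 R) x₅ x₂ x₆ x₄) :=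
  rowSym42_inner_mul (toFun4 R) hR.pair_symm x₁ x₂ x₃ x₄ x₅ x₆

include hric

theorem sum_rowSym42_innerTensor_trace₅₆ (x₁ x₂ x₃ x₄ : V) :
    ∑ i, rowSym42 (innerTensor R) x₁ x₂ x₃ x₄ (e i) (e i) =
      4 * (n + 4) * sym24 (toFun4 R) x₁ x₂ x₃ x₄ := by
  simp only [rowSym42_innerTensor hR, sym24, toFun4, mul_add, Finset.sum_add_distrib,
    ← Finset.mul_sum, e.inner_eq_one, real_inner_comm (e _), sum_inner_mul_apply₃,
    hR.sum_apply₁₃_eq_zero hric, Finset.sum_const, Finset.card_univ, Fintype.card_fin,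
    nsmul_eq_mul]
  linear_combination 8 * hR.pair_symm x₃ x₂ x₁ x₄ + 8 * hR.pair_symm x₃ x₄ x₁ x₂

theorem sum_rowSym42_innerTensor_trace₁₃ (x₂ x₄ x₅ x₆ : V) :
    ∑ i, rowSym42 (innerTensor R) (e i) x₂ (e i) x₄ x₅ x₆ =
      4 * (n + 4) * sym24 (toFun4 R) x₅ x₂ x₆ x₄ := by
  simp only [rowSym42_innerTensor hR, sym24, toFun4, mul_add, Finset.sum_add_distrib,
    ← Finset.mul_sum, e.inner_eq_one, sum_inner_mul_apply₁, hR.sum_apply₁₃_eq_zero hric,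
    Finset.sum_const, Finset.card_univ, Fintype.card_fin, nsmul_eq_mul]
  linear_combination 8 * hR.pair_symm x₆ x₂ x₅ x₄ + 8 * hR.pair_symm x₆ x₄ x₅ x₂

theorem sum_rowSym42_innerTensor_trace₂₃ (x₁ x₄ x₅ x₆ : V) :
    ∑ i, rowSym42 (innerTensor R) x₁ (e i) (e i) x₄ x₅ x₆ =
      4 * (sym24 (toFun4 R) x₁ x₆ x₅ x₄ + sym24 (toFun4 R) x₁ x₅ x₆ x₄
        + sym24 (toFun4 R) x₅ x₁ x₆ x₄) := by
  simp only [rowSym42_innerTensor hR, sym24, toFun4, mul_add, Finset.sum_add_distrib,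
    ← Finset.mul_sum, real_inner_comm (e _), sum_inner_mul_apply₂, sum_inner_mul_apply₄,
    hR.apply_self_left, hR.apply_self_right, hR.sum_apply₁₄_eq_zero hric,
    hR.sum_apply₂₃_eq_zero hric, Finset.sum_const_zero]
  ring

theorem sum_rowSym42_innerTensor_trace₁₄ (x₂ x₃ x₅ x₆ : V) :
    ∑ i, rowSym42 (innerTensor R) (e i) x₂ x₃ (e i) x₅ x₆ =
      4 * (sym24 (toFun4 R) x₃ x₂ x₅ x₆ + sym24 (toFun4 R) x₃ x₂ x₆ x₅
        + sym24 (toFun4 R) x₅ x₂ x₆ x₃) := by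
  simp only [rowSym42_innerTensor hR, sym24, toFun4, mul_add, Finset.sum_add_distrib,
    ← Finset.mul_sum, sum_inner_mul_apply₂, sum_inner_mul_apply₄, hR.apply_self_left,
    hR.sum_apply₁₄_eq_zero hric, Finset.sum_const_zero]
  ring

theorem sum_rowSym42_innerTensor_trace₂₄ (x₁ x₃ x₅ x₆ : V) :
    ∑ i, rowSym42 (innerTensor R) x₁ (e i) x₃ (e i) x₅ x₆ = 0 := by
  simp only [rowSym42_innerTensor hR, sym24, toFun4, mul_add, Finset.sum_add_distrib,
    ← Finset.mul_sum, sum_apply₂₄_eq_zero hric]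
  ring

theorem sum_young42_innerTensor_trace₅₆ (x₁ x₂ x₃ x₄ : V) :
    ∑ i, young42 (innerTensor R) x₁ x₂ x₃ x₄ (e i) (e i) = 24 * (n + 4) * R x₁ x₂ x₃ x₄ := by
  simp only [young42, Finset.sum_add_distrib, Finset.sum_sub_distrib,
    sum_rowSym42_innerTensor_trace₅₆ hR hric]
  linear_combination 4 * (n + 4 : ℝ) * hR.sym24_alternate x₁ x₂ x₃ x₄

theorem sum_young42_innerTensor_trace₁₃ (x₂ x₄ x₅ x₆ : V) :
    ∑ i, young42 (innerTensor R) (e i) x₂ (e i) x₄ x₅ x₆ =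
      4 * (n + 4) * (R x₅ x₂ x₆ x₄ + R x₅ x₄ x₆ x₂) := by
  simp only [young42, Finset.sum_add_distrib, Finset.sum_sub_distrib,
    sum_rowSym42_innerTensor_trace₁₃ hR hric, sum_rowSym42_innerTensor_trace₂₃ hR hric,
    sum_rowSym42_innerTensor_trace₁₄ hR hric, sum_rowSym42_innerTensor_trace₂₄ hR hric, sym24,
    toFun4]
  linear_combination (-4) * (hR.bianchi x₆ x₅ x₄ x₂ + hR.bianchi x₅ x₂ x₆ x₄
    + hR.antisymm_left x₄ x₅ x₆ x₂ + hR.antisymm_left x₂ x₅ x₆ x₄ + hR.antisymm_right x₂ x₄ x₅ x₆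
    - hR.antisymm_right x₆ x₅ x₄ x₂ + hR.antisymm_right x₄ x₂ x₆ x₅)

end InnerTensor

/-- Traces of the canonical embedding
`Ŝ = Young(4,2)(g ⊗ R)` of a Ricci-flat algebraic curvature tensor. -/
theorem canonical_embedding_traces
    {V : Type*} [NormedAddCommGroup V] [InnerProductSpace ℝ V] {n : ℕ}
    (e : OrthonormalBasis (Fin n) ℝ V)
    (R : Curv V) (hR : IsCurv R) (hric : ∀ x y, ric e R x y = 0) :
    (∀ x₂ x₄ x₅ x₆,
      -∑ i, young42 (fun z₁ z₂ z₃ z₄ z₅ z₆ => ⟪z₅, z₆⟫ * R z₁ z₂ z₃ z₄)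
          (e i) x₂ (e i) x₄ x₅ x₆ =
        -4 * ((n : ℝ) + 4) * (R x₅ x₂ x₆ x₄ + R x₅ x₄ x₆ x₂)) ∧
    (∀ x₁ x₂ x₃ x₄,
      -∑ i, young42 (fun z₁ z₂ z₃ z₄ z₅ z₆ => ⟪z₅, z₆⟫ * R z₁ z₂ z₃ z₄)
          x₁ x₂ x₃ x₄ (e i) (e i) =
        -24 * ((n : ℝ) + 4) * R x₁ x₂ x₃ x₄) := by
  refine ⟨fun x₂ x₄ x₅ x₆ => ?_, fun x₁ x₂ x₃ x₄ => ?_⟩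
  · have h := sum_young42_innerTensor_trace₁₃ hR hric x₂ x₄ x₅ x₆
    unfold innerTensor at h
    linarith
  · have h := sum_young42_innerTensor_trace₅₆ hR hric x₁ x₂ x₃ x₄
    unfold innerTensor at h
    linarith

end CurvJet
end
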